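/- Every POVM on ℂ³ that is informationally complete with respect to the set of pure states on ℂ³ has at least 8 outcomes, and there exists a POVM on ℂ³ with exactly 8 outcomes that is informationally complete with respect to the set of pure states on ℂ³. -/

import Mathlib

/-!
If `n ≤ 7`, the real-linear map `D ↦ (tr (D A j))ⱼ` on the 9-dimensional space of Hermitian
`3 × 3` matrices has a kernel of dimension at least 2. As 3 is odd, `det (cos θ • X + sin θ • Y)`
changes sign between `θ = 0` and `θ = π`, so the kernel contains a nonzero singular `D`. It is
traceless because `∑ j, A j = 1`, so its eigenvalues are `t, -t, 0` and `D = t • (ρ₁ - ρ₂)` for two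
distinct pure states `ρ₁, ρ₂` which `A` does not distinguish.

Conversely, with the Gell-Mann matrices `λ₁, …, λ₇` take the POVM `(1 + λₖ / 8) / 8`, completed by
`(1 - ∑ₖ λₖ / 8) / 8`. Its statistics determine a traceless `Δ` up to a multiple of
`diag(1, 1, -2)`, which has rank 3, while a difference of two pure states has rank at most 2.
-/

open Matrix
open scoped ComplexOrder

/-- A POVM with `n` outcomes on `ℂ^d`: a family of positive semidefinite matrices summing to the
identity. -/
def IsPOVM {d n : ℕ} (A : Fin n → Matrix (Fin d) (Fin d) ℂ) : Prop :=
  (∀ j, (A j).PosSemidef) ∧ ∑ j, A j = 1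

/-- A state on `ℂ^d`: a positive semidefinite matrix with trace 1. -/
def IsState {d : ℕ} (ρ : Matrix (Fin d) (Fin d) ℂ) : Prop :=
  ρ.PosSemidef ∧ ρ.trace = 1

/-- A family of matrices (e.g. a POVM or a collection of selfadjoint operators) is
informationally complete w.r.t. a set `P` of states if the expectation values
`trace (ρ * A j)` separate the points of `P`. -/
def IsIC {d n : ℕ} (A : Fin n → Matrix (Fin d) (Fin d) ℂ)
    (P : Set (Matrix (Fin d) (Fin d) ℂ)) : Prop :=
  ∀ ρ₁ ∈ P, ∀ ρ₂ ∈ P, (∀ j, (ρ₁ * A j).trace = (ρ₂ * A j).trace) → ρ₁ = ρ₂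

/-- The set of pure states on `ℂ^d`: states of rank 1. -/
def PureStates (d : ℕ) : Set (Matrix (Fin d) (Fin d) ℂ) :=
  {ρ | IsState ρ ∧ ρ.rank = 1}

open Module

namespace Matrix

variable {K m n : Type*} [Field K] [Fintype n]

theorem rank_sub_le [Fintype m] (A B : Matrix m n K) : (A - B).rank ≤ A.rank + B.rank := by
  unfold rank
  refine (Submodule.finrank_mono ?_).trans (Submodule.finrank_add_le_finrank_add_finrank _ _)
  rintro _ ⟨v, rfl⟩
  simpa [sub_mulVec] using Submodule.sub_mem_sup (LinearMap.mem_range_self A.mulVecLin v)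
    (LinearMap.mem_range_self B.mulVecLin v)

theorem rank_eq_zero_iff (A : Matrix m n K) : A.rank = 0 ↔ A = 0 := by
  classical
  refine ⟨fun h => ?_, fun h => h ▸ rank_zero⟩
  rw [rank, Submodule.finrank_eq_zero, LinearMap.range_eq_bot] at h
  exact toLin'.injective (by rw [toLin'_apply', h, map_zero])

end Matrix

namespace Matrix.IsHermitian

variable {𝕜 n : Type*} [RCLike 𝕜] [Fintype n] [DecidableEq n] {A : Matrix n n 𝕜}

theorem eq_sum_eigenvalues_smul_vecMulVec (hA : A.IsHermitian) :
    A = ∑ i, hA.eigenvalues i •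
      vecMulVec ⇑(hA.eigenvectorBasis i) (star ⇑(hA.eigenvectorBasis i)) := by
  conv_lhs => rw [hA.spectral_theorem, Unitary.conjStarAlgAut_apply]
  ext x y
  rw [mul_apply, Matrix.sum_apply]
  refine Finset.sum_congr rfl fun i _ => ?_
  rw [mul_diagonal, smul_apply, vecMulVec_apply, RCLike.real_smul_eq_coe_smul (K := 𝕜)]
  simp only [eigenvectorUnitary_apply, Function.comp_apply, star_apply, RCLike.star_def,
    Pi.star_apply, smul_eq_mul]
  ring

/-- By Gershgorin's theorem every eigenvalue is within `∑ j ≠ k, ‖A k j‖` of some `A k k`. -/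
theorem posSemidef_of_diagonallyDominant (hA : A.IsHermitian)
    (h : ∀ i, ∑ j ∈ Finset.univ.erase i, ‖A i j‖ ≤ RCLike.re (A i i)) : A.PosSemidef := by
  rw [hA.posSemidef_iff_eigenvalues_nonneg]
  intro i
  have hμ : Module.End.HasEigenvalue (toLin' A) (hA.eigenvalues i : 𝕜) := by
    rw [Module.End.hasEigenvalue_iff_mem_spectrum, spectrum_toLin']
    exact spectrum.algebraMap_mem 𝕜 (hA.eigenvalues_mem_spectrum_real i)
  obtain ⟨k, hk⟩ := eigenvalue_mem_ball hμ
  rw [Metric.mem_closedBall, dist_eq_norm] at hk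
  have hre := RCLike.re_le_norm (A k k - (hA.eigenvalues i : 𝕜))
  rw [← norm_neg, neg_sub, map_sub, RCLike.ofReal_re] at hre
  simp only [Pi.zero_apply]
  linarith [h k]

theorem posSemidef_one_add_smul (hA : A.IsHermitian) {c : ℝ} (hc : 0 ≤ c)
    (h : ∀ i, c * ∑ j, ‖A i j‖ ≤ 1) : (1 + c • A).PosSemidef := by
  refine (isHermitian_one.add (hA.smul (IsSelfAdjoint.all c))).posSemidef_of_diagonallyDominant
    fun i => ?_
  have hdiag := neg_le_of_abs_le (RCLike.abs_re_le_norm (A i i))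
  have hsum := Finset.add_sum_erase Finset.univ (fun j => ‖A i j‖) (Finset.mem_univ i)
  have hoff : ∑ j ∈ Finset.univ.erase i, ‖(1 + c • A) i j‖ =
      c * ∑ j ∈ Finset.univ.erase i, ‖A i j‖ := by
    rw [Finset.mul_sum]
    refine Finset.sum_congr rfl fun j hj => ?_
    simp [one_apply_ne' (Finset.ne_of_mem_erase hj), norm_smul, abs_of_nonneg hc]
  rw [hoff, add_apply, one_apply_eq, smul_apply, map_add, RCLike.one_re, RCLike.smul_re]
  nlinarith [h i, mul_le_mul_of_nonneg_left hdiag hc]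

end Matrix.IsHermitian

theorem Matrix.IsHermitian.im_trace_mul_eq_zero {n : Type*} [Fintype n]
    {X Y : Matrix n n ℂ} (hX : X.IsHermitian) (hY : Y.IsHermitian) : (X * Y).trace.im = 0 := by
  rw [← Complex.conj_eq_iff_im, ← Complex.star_def, ← trace_conjTranspose, conjTranspose_mul, hX.eq,
    hY.eq, trace_mul_comm]

section SelfAdjoint

variable {A : Type*} [AddCommGroup A] [Module ℂ A] [StarAddMonoid A] [StarModule ℂ A]

noncomputable def skewAdjoint.equivSelfAdjoint : skewAdjoint A ≃ₗ[ℝ] selfAdjoint A :=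
  LinearEquiv.ofBijective skewAdjoint.negISMul
    ⟨fun a b h => by
      ext
      simpa [skewAdjoint.I_smul_neg_I] using
        congrArg (fun x : selfAdjoint A => Complex.I • (x : A)) h,
     fun x => ⟨⟨Complex.I • (x : A), by simp⟩, by ext; simp [smul_smul]⟩⟩

variable [FiniteDimensional ℝ A]

instance : Module.Finite ℝ (selfAdjoint A) :=
  Module.Finite.of_surjective
    ((LinearMap.fst ℝ (selfAdjoint A) (skewAdjoint A)).comp
      (StarModule.decomposeProdAdjoint ℝ A).toLinearMap)
    (Prod.fst_surjective.comp (StarModule.decomposeProdAdjoint ℝ A).surjective)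

theorem two_mul_finrank_selfAdjoint : 2 * finrank ℝ (selfAdjoint A) = finrank ℝ A := by
  have : Module.Finite ℝ (skewAdjoint A) := Module.Finite.equiv skewAdjoint.equivSelfAdjoint.symm
  rw [two_mul, (StarModule.decomposeProdAdjoint ℝ A).finrank_eq, finrank_prod,
    skewAdjoint.equivSelfAdjoint.finrank_eq]

end SelfAdjoint

theorem finrank_selfAdjoint_matrix (n : Type*) [Fintype n] :
    finrank ℝ (selfAdjoint (Matrix n n ℂ)) = Fintype.card n * Fintype.card n := by
  have := two_mul_finrank_selfAdjoint (A := Matrix n n ℂ)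
  rw [finrank_matrix, Complex.finrank_real_complex] at this
  omega

section HermitianMatrix

variable {n : Type*} [Fintype n] [DecidableEq n]

theorem im_det_selfAdjoint_eq_zero (D : selfAdjoint (Matrix n n ℂ)) :
    (D : Matrix n n ℂ).det.im = 0 := by
  rw [← Complex.conj_eq_iff_im, ← Complex.star_def, ← det_conjTranspose]
  exact congrArg det D.prop

theorem exists_det_cos_smul_add_sin_smul_eq_zero (hn : Odd (Fintype.card n))
    (X Y : selfAdjoint (Matrix n n ℂ)) :
    ∃ θ : ℝ, ((Real.cos θ • X + Real.sin θ • Y : selfAdjoint (Matrix n n ℂ)) :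
      Matrix n n ℂ).det = 0 := by
  set g : ℝ → ℝ := fun θ =>
    ((Real.cos θ • X + Real.sin θ • Y : selfAdjoint (Matrix n n ℂ)) : Matrix n n ℂ).det.re
  have hg : Continuous g := by
    refine Complex.continuous_re.comp (Continuous.matrix_det ?_)
    simp only [AddMemClass.coe_add, selfAdjoint.val_smul]
    fun_prop
  have hg_pi : g Real.pi = -g 0 := by
    simp [g, det_neg, hn.neg_one_pow]
  obtain ⟨θ, hθ⟩ : (0 : ℝ) ∈ Set.range g := by
    rcases le_total (g 0) 0 with h | h
    · exact mem_range_of_exists_le_of_exists_ge hg ⟨0, h⟩ ⟨Real.pi, by linarith⟩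
    · exact mem_range_of_exists_le_of_exists_ge hg ⟨Real.pi, by linarith⟩ ⟨0, h⟩
  exact ⟨θ, Complex.ext hθ (im_det_selfAdjoint_eq_zero _)⟩

theorem exists_ne_zero_det_eq_zero (hn : Odd (Fintype.card n))
    (V : Submodule ℝ (selfAdjoint (Matrix n n ℂ))) (hV : 1 < finrank ℝ V) :
    ∃ D ∈ V, D ≠ 0 ∧ (D : Matrix n n ℂ).det = 0 := by
  obtain ⟨X, hX⟩ := (finrank_pos_iff_exists_ne_zero (R := ℝ) (M := V)).mp (by omega)
  obtain ⟨Y, hXY⟩ := exists_linearIndependent_pair_of_one_lt_finrank hV hX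
  obtain ⟨θ, hθ⟩ := exists_det_cos_smul_add_sin_smul_eq_zero hn X Y
  refine ⟨Real.cos θ • X + Real.sin θ • Y, (Real.cos θ • X + Real.sin θ • Y).2, fun h => ?_, hθ⟩
  have := LinearIndependent.pair_iff.mp hXY (Real.cos θ) (Real.sin θ) (Subtype.ext h)
  nlinarith [Real.sin_sq_add_cos_sq θ]

end HermitianMatrix

theorem vecMulVec_star_mem_pureStates {d : ℕ} {v : EuclideanSpace ℂ (Fin d)} (hv : ‖v‖ = 1) :
    vecMulVec ⇑v (star ⇑v) ∈ PureStates d := by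
  have htrace : (vecMulVec ⇑v (star ⇑v)).trace = 1 := by
    rw [trace_vecMulVec, ← EuclideanSpace.inner_eq_star_dotProduct, inner_self_eq_norm_sq_to_K,
      hv]
    simp
  refine ⟨⟨posSemidef_vecMulVec_self_star _, htrace⟩, le_antisymm (rank_vecMulVec_le _ _) ?_⟩
  rw [Nat.one_le_iff_ne_zero, Ne, Matrix.rank_eq_zero_iff]
  rintro h
  simp [h] at htrace

theorem rank_sub_le_two_of_mem_pureStates {d : ℕ} {ρ₁ ρ₂ : Matrix (Fin d) (Fin d) ℂ}
    (h₁ : ρ₁ ∈ PureStates d) (h₂ : ρ₂ ∈ PureStates d) : (ρ₁ - ρ₂).rank ≤ 2 :=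
  (rank_sub_le ρ₁ ρ₂).trans (by rw [h₁.2, h₂.2])

theorem exists_sum_smul_eq_smul_sub {M : Type*} [AddCommGroup M] [Module ℝ M] {μ : Fin 3 → ℝ}
    (hsum : ∑ i, μ i = 0) (hprod : ∏ i, μ i = 0) (P : Fin 3 → M) :
    ∃ i j, ∑ m, μ m • P m = μ i • (P i - P j) := by
  obtain ⟨k, -, hk⟩ := Finset.prod_eq_zero_iff.mp hprod
  rw [Fin.sum_univ_three] at hsum ⊢
  fin_cases k <;> simp only [Fin.zero_eta, Fin.mk_one, Fin.reduceFinMk] at hk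
  · exact ⟨1, 2, by rw [hk, show μ 2 = -μ 1 by linarith]; module⟩
  · exact ⟨0, 2, by rw [hk, show μ 2 = -μ 0 by linarith]; module⟩
  · exact ⟨0, 1, by rw [hk, show μ 1 = -μ 0 by linarith]; module⟩

theorem exists_pureStates_of_trace_eq_zero_of_det_eq_zero {D : Matrix (Fin 3) (Fin 3) ℂ}
    (hD : D.IsHermitian) (htrace : D.trace = 0) (hdet : D.det = 0) :
    ∃ ρ₁ ∈ PureStates 3, ∃ ρ₂ ∈ PureStates 3, ∃ t : ℝ, D = t • (ρ₁ - ρ₂) := by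
  have hsum : ∑ i, hD.eigenvalues i = 0 := by
    have h := hD.trace_eq_sum_eigenvalues.symm.trans htrace
    rwa [← RCLike.ofReal_sum, RCLike.ofReal_eq_zero] at h
  have hprod : ∏ i, hD.eigenvalues i = 0 := by
    have h := hD.det_eq_prod_eigenvalues.symm.trans hdet
    rwa [← RCLike.ofReal_prod, RCLike.ofReal_eq_zero] at h
  set P : Fin 3 → Matrix (Fin 3) (Fin 3) ℂ :=
    fun i => vecMulVec ⇑(hD.eigenvectorBasis i) (star ⇑(hD.eigenvectorBasis i))
  have hP (i : Fin 3) : P i ∈ PureStates 3 :=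
    vecMulVec_star_mem_pureStates (hD.eigenvectorBasis.orthonormal.1 i)
  obtain ⟨i, j, hij⟩ := exists_sum_smul_eq_smul_sub hsum hprod P
  exact ⟨P i, hP i, P j, hP j, hD.eigenvalues i, hD.eq_sum_eigenvalues_smul_vecMulVec.trans hij⟩

theorem IsIC.eq_zero_of_det_eq_zero {n : ℕ} {A : Fin n → Matrix (Fin 3) (Fin 3) ℂ}
    (hA : IsPOVM A) (hIC : IsIC A (PureStates 3)) {D : Matrix (Fin 3) (Fin 3) ℂ}
    (hD : D.IsHermitian) (hDA : ∀ j, (D * A j).trace = 0) (hdet : D.det = 0) : D = 0 := by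
  have htrace : D.trace = 0 := by
    rw [← mul_one D, ← hA.2, Matrix.mul_sum, trace_sum]
    exact Finset.sum_eq_zero fun j _ => hDA j
  obtain ⟨ρ₁, h₁, ρ₂, h₂, t, rfl⟩ :=
    exists_pureStates_of_trace_eq_zero_of_det_eq_zero hD htrace hdet
  rcases eq_or_ne t 0 with rfl | ht
  · exact zero_smul ℝ _
  have hsame (j : Fin n) : (ρ₁ * A j).trace = (ρ₂ * A j).trace := by
    have := hDA j
    rwa [smul_mul_assoc, trace_smul, smul_eq_zero_iff_right ht, sub_mul, trace_sub,
      sub_eq_zero] at this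
  rw [hIC ρ₁ h₁ ρ₂ h₂ hsame, sub_self, smul_zero]

/-- Real parts only, so that the codomain has real dimension `card ι`; for Hermitian `A j` the
traces are real anyway. -/
noncomputable def expectationMap {ι n : Type*} [Fintype n] (A : ι → Matrix n n ℂ) :
    selfAdjoint (Matrix n n ℂ) →ₗ[ℝ] (ι → ℝ) where
  toFun D j := ((D : Matrix n n ℂ) * A j).trace.re
  map_add' D E := by ext j; simp [add_mul, trace_add]
  map_smul' c D := by ext j; simp [trace_smul]

theorem eight_le_of_isIC {n : ℕ} {A : Fin n → Matrix (Fin 3) (Fin 3) ℂ} (hA : IsPOVM A)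
    (hIC : IsIC A (PureStates 3)) : 8 ≤ n := by
  by_contra! hn
  have hker : 1 < finrank ℝ (LinearMap.ker (expectationMap A)) := by
    have hrank := LinearMap.finrank_range_add_finrank_ker (expectationMap A)
    have hrange := Submodule.finrank_le (LinearMap.range (expectationMap A))
    rw [finrank_selfAdjoint_matrix, Fintype.card_fin] at hrank
    rw [finrank_fin_fun] at hrange
    omega
  obtain ⟨D, hDker, hD0, hdet⟩ := exists_ne_zero_det_eq_zero (by decide) _ hker
  refine hD0 (Subtype.ext (hIC.eq_zero_of_det_eq_zero hA D.prop.isHermitian (fun j => ?_) hdet))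
  exact Complex.ext (congrFun (LinearMap.mem_ker.mp hDker) j)
    (D.prop.isHermitian.im_trace_mul_eq_zero (hA.1 j).isHermitian)

theorem isIC_pureStates_of_rank_le_two {d n : ℕ} {A : Fin n → Matrix (Fin d) (Fin d) ℂ}
    (h : ∀ Δ : Matrix (Fin d) (Fin d) ℂ,
      Δ.trace = 0 → (∀ j, (Δ * A j).trace = 0) → Δ.rank ≤ 2 → Δ = 0) :
    IsIC A (PureStates d) := by
  intro ρ₁ h₁ ρ₂ h₂ hsame
  refine sub_eq_zero.mp (h _ ?_ (fun j => ?_) (rank_sub_le_two_of_mem_pureStates h₁ h₂))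
  · rw [trace_sub, h₁.1.2, h₂.1.2, sub_self]
  · rw [sub_mul, trace_sub, hsame j, sub_self]

open Complex in
/-- The Gell-Mann matrices `λ₁, …, λ₇`. The omitted `λ₈ ∝ diag(1, 1, -2)` has full rank, so no
difference of two pure states is invisible to the POVM built from the others. -/
def gellMann : Fin 7 → Matrix (Fin 3) (Fin 3) ℂ :=
  ![!![0, 1, 0; 1, 0, 0; 0, 0, 0], !![0, -I, 0; I, 0, 0; 0, 0, 0],
    !![1, 0, 0; 0, -1, 0; 0, 0, 0], !![0, 0, 1; 0, 0, 0; 1, 0, 0],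
    !![0, 0, -I; 0, 0, 0; I, 0, 0], !![0, 0, 0; 0, 0, 1; 0, 1, 0],
    !![0, 0, 0; 0, 0, -I; 0, I, 0]]

theorem isHermitian_gellMann (k : Fin 7) : (gellMann k).IsHermitian := by
  ext i j
  fin_cases k <;> fin_cases i <;> fin_cases j <;> simp [gellMann]

theorem sum_norm_gellMann_le_one (k : Fin 7) (i : Fin 3) : ∑ j, ‖gellMann k i j‖ ≤ 1 := by
  fin_cases k <;> fin_cases i <;> simp [gellMann, Fin.sum_univ_three]

theorem eq_smul_of_trace_mul_gellMann_eq_zero {Δ : Matrix (Fin 3) (Fin 3) ℂ}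
    (htrace : Δ.trace = 0) (h : ∀ k, (Δ * gellMann k).trace = 0) :
    Δ = Δ 0 0 • diagonal ![1, 1, -2] := by
  have h₀ := h 0; have h₁ := h 1; have h₂ := h 2; have h₃ := h 3
  have h₄ := h 4; have h₅ := h 5; have h₆ := h 6
  simp only [gellMann, Fin.isValue, cons_val_zero, trace_fin_three, mul_apply, of_apply, cons_val',
    cons_val_fin_one, Fin.sum_univ_three, mul_zero, cons_val_one, mul_one, zero_add, cons_val,
    add_zero, mul_neg] at h₀ h₁ h₂ h₃ h₄ h₅ h₆
  rw [trace_fin_three] at htrace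
  have e₀₁ : Δ 0 1 = Δ 1 0 := mul_right_cancel₀ Complex.I_ne_zero (by linear_combination h₁)
  have e₀₂ : Δ 0 2 = Δ 2 0 := mul_right_cancel₀ Complex.I_ne_zero (by linear_combination h₄)
  have e₁₂ : Δ 1 2 = Δ 2 1 := mul_right_cancel₀ Complex.I_ne_zero (by linear_combination h₆)
  ext i j
  fin_cases i <;> fin_cases j <;> simp [diagonal] <;> grind

noncomputable def gellMannPOVM : Fin 8 → Matrix (Fin 3) (Fin 3) ℂ :=
  Fin.snoc (fun k => (8⁻¹ : ℝ) • (1 + (8⁻¹ : ℝ) • gellMann k))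
    ((8⁻¹ : ℝ) • (1 + (8⁻¹ : ℝ) • -∑ k, gellMann k))

theorem sum_gellMannPOVM : ∑ j, gellMannPOVM j = 1 := by
  simp only [gellMannPOVM, Fin.sum_univ_castSucc, Fin.snoc_castSucc, Fin.snoc_last,
    Finset.sum_add_distrib, ← Finset.smul_sum, smul_add, Finset.sum_const, Finset.card_univ,
    Fintype.card_fin]
  module

theorem posSemidef_gellMannPOVM (j : Fin 8) : (gellMannPOVM j).PosSemidef := by
  refine Fin.lastCases ?_ (fun k => ?_) j
  · simp only [gellMannPOVM, Fin.snoc_last]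
    have hG : (-∑ k, gellMann k).IsHermitian :=
      (isSelfAdjoint_sum _ fun k _ => (isHermitian_gellMann k).isSelfAdjoint).isHermitian.neg
    refine PosSemidef.smul (hG.posSemidef_one_add_smul (by norm_num) fun i => ?_) (by norm_num)
    have hrow : ∑ j, ‖(-∑ k, gellMann k) i j‖ ≤ 7 := calc
      _ ≤ ∑ j, ∑ k, ‖gellMann k i j‖ := Finset.sum_le_sum fun j _ => by
        simpa [Matrix.sum_apply] using norm_sum_le _ _
      _ = ∑ k, ∑ j, ‖gellMann k i j‖ := Finset.sum_comm
      _ ≤ ∑ k : Fin 7, 1 := Finset.sum_le_sum fun k _ => sum_norm_gellMann_le_one k i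
      _ = 7 := by simp
    linarith
  · simp only [gellMannPOVM, Fin.snoc_castSucc]
    refine PosSemidef.smul ((isHermitian_gellMann k).posSemidef_one_add_smul (by norm_num)
      fun i => ?_) (by norm_num)
    linarith [sum_norm_gellMann_le_one k i]

theorem isIC_gellMannPOVM : IsIC gellMannPOVM (PureStates 3) := by
  refine isIC_pureStates_of_rank_le_two fun Δ htrace hΔ hrank => ?_
  have hk (k : Fin 7) : (Δ * gellMann k).trace = 0 := by
    simpa [gellMannPOVM, mul_add, trace_add, trace_smul, htrace] using hΔ k.castSucc
  rw [eq_smul_of_trace_mul_gellMann_eq_zero htrace hk] at hrank ⊢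
  by_contra hne
  have h00 : Δ 0 0 ≠ 0 := fun h => hne (by rw [h, zero_smul])
  rw [rank_of_det_ne_zero (by simp [Fin.prod_univ_three, h00]), Fintype.card_fin] at hrank
  omega

/-- A minimal POVM on `ℂ³` which is informationally complete w.r.t. the pure states has exactly
`8` outcomes: every such POVM has at least `8` outcomes and one with `8` outcomes exists. -/
theorem pure_state_ic_dim3_minimal :
    (∀ (n : ℕ) (A : Fin n → Matrix (Fin 3) (Fin 3) ℂ),
        IsPOVM A → IsIC A (PureStates 3) → 8 ≤ n) ∧
    (∃ A : Fin 8 → Matrix (Fin 3) (Fin 3) ℂ, IsPOVM A ∧ IsIC A (PureStates 3)) := by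
  exact ⟨fun _ _ => eight_le_of_isIC,
    ⟨gellMannPOVM, ⟨posSemidef_gellMannPOVM, sum_gellMannPOVM⟩, isIC_gellMannPOVM⟩⟩
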